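/- Let S be a unital semigroup of partial isometries on a complex Hilbert space H such that Q(S) = {T T* : T in S} is commutative. Then there exists a semigroup S_max of partial isometries on H such that: (i) S ⊆ S_max; (ii) the double commutant of Q(S_max) equals the double commutant of Q(S); (iii) S_max is maximal with respect to (i) and (ii), i.e. any semigroup R of partial isometries with S_max ⊆ R and Q(R)'' = Q(S)'' satisfies R = S_max; and moreover (iv) T T* belongs to S_max for every T in S_max. -/

import Mathlib

/-!
By Zorn's lemma there is a semigroup `M ⊇ 𝒮` of partial isometries that is maximal among those
whose final projections lie in the abelian von Neumann algebra `𝒜 = Q(𝒮)''`; for any such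
semigroup containing `𝒮` one automatically has `Q(·)'' = 𝒜`, which gives (i)–(iii).

For (iv), the Halmos–Wallen lemma (projections `e`, `f` with `e f` idempotent commute) shows that
the initial projections `a* a`, `a ∈ M`, commute with `𝒜`. Consequently the star projections all
of whose conjugates `a p a*` (`a ∈ M`) lie in `𝒜` are closed under products and under conjugation
by `M`, and the products `p a` form a semigroup of partial isometries with final projections in
`𝒜`. It contains `M`, so by maximality it equals `M`; and it contains `a a* = (a a*) 1`.
-/

open scoped Pointwise

def IsPartialIsometry {R : Type*} [Mul R] [Star R] (a : R) : Prop :=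
  a * star a * a = a

structure IsPartialIsometrySemigroup {R : Type*} [Mul R] [Star R] (S : Set R) : Prop where
  mul_mem : ∀ a ∈ S, ∀ b ∈ S, a * b ∈ S
  isPartialIsometry : ∀ a ∈ S, IsPartialIsometry a

namespace IsPartialIsometry

variable {R : Type*} [Monoid R] [StarMul R] {a : R}

protected theorem star (ha : IsPartialIsometry a) : IsPartialIsometry (star a) := by
  simpa [IsPartialIsometry, star_mul, mul_assoc] using congr(star $ha)

theorem isStarProjection_mul_star (ha : IsPartialIsometry a) :
    IsStarProjection (a * star a) where
  isIdempotentElem := by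
    rw [IsIdempotentElem, ← mul_assoc, ha]
  isSelfAdjoint := by simp [IsSelfAdjoint, star_mul]

theorem isStarProjection_star_mul (ha : IsPartialIsometry a) :
    IsStarProjection (star a * a) := by
  simpa using ha.star.isStarProjection_mul_star

theorem mul_mul_star_mul_self {p : R} (ha : IsPartialIsometry a) (hp : Commute (star a * a) p) :
    a * p * (star a * a) = a * p := by
  rw [mul_assoc, ← hp.eq, ← mul_assoc, ← mul_assoc, ha]

end IsPartialIsometry

theorem IsStarProjection.commute_of_isIdempotentElem_mul {R : Type*} [NormedRing R] [StarRing R]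
    [CStarRing R] {e f : R} (he : IsStarProjection e) (hf : IsStarProjection f)
    (hef : IsIdempotentElem (e * f)) : Commute e f := by
  have hfe : star (e * f) = f * e := by
    rw [star_mul, he.isSelfAdjoint.star_eq, hf.isSelfAdjoint.star_eq]
  -- `y = (1 - f) e f` has `y* y = f e f - f (e f) (e f) = 0`, so `y = 0` by the C⋆-identity.
  have hy : (1 - f) * e * f = 0 := by
    rw [← CStarRing.star_mul_self_eq_zero_iff]
    calc star ((1 - f) * e * f) * ((1 - f) * e * f)
        = f * e * ((1 - f) * (1 - f)) * e * f := by
          simp only [star_mul, star_sub, star_one, he.isSelfAdjoint.star_eq,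
            hf.isSelfAdjoint.star_eq, mul_assoc]
      _ = f * (e * e) * f - f * (e * f * (e * f)) := by
          rw [hf.one_sub.isIdempotentElem.eq]; noncomm_ring
      _ = 0 := by rw [he.isIdempotentElem.eq, hef.eq]; noncomm_ring
  have hleft : e * f = f * e * f := by
    rw [← sub_eq_zero, ← hy]; noncomm_ring
  have hright : f * e = f * e * f := by
    rw [← hfe, hleft]
    simp only [star_mul, he.isSelfAdjoint.star_eq, hf.isSelfAdjoint.star_eq, mul_assoc,
      hf.isIdempotentElem.eq]
  exact hleft.trans hright.symm

theorem IsPartialIsometry.commute_star_mul_self_mul_star_self {R : Type*} [NormedRing R]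
    [StarRing R] [CStarRing R] {a b : R} (ha : IsPartialIsometry a) (hb : IsPartialIsometry b)
    (hab : IsPartialIsometry (a * b)) : Commute (star a * a) (b * star b) := by
  refine ha.isStarProjection_star_mul.commute_of_isIdempotentElem_mul
    hb.isStarProjection_mul_star ?_
  have := congr(star a * $hab * star b)
  simp only [IsIdempotentElem, star_mul, mul_assoc] at this ⊢
  exact this

def projectionsWithConjugatesIn {R : Type*} [Mul R] [Star R] (M 𝒜 : Set R) : Set R :=
  {p | IsStarProjection p ∧ ∀ a ∈ M, a * p * star a ∈ 𝒜}

section Extension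

variable {R : Type*} [Monoid R] [StarMul R] {M 𝒜 : Set R}

theorem mem_of_mem_projectionsWithConjugatesIn (h1 : 1 ∈ M) {p : R}
    (hp : p ∈ projectionsWithConjugatesIn M 𝒜) : p ∈ 𝒜 := by
  simpa using hp.2 1 h1

theorem one_mem_projectionsWithConjugatesIn (hQ : ∀ a ∈ M, a * star a ∈ 𝒜) :
    1 ∈ projectionsWithConjugatesIn M 𝒜 :=
  ⟨.one _, fun a ha => by simpa using hQ a ha⟩

theorem mul_star_mem_projectionsWithConjugatesIn (hM : IsPartialIsometrySemigroup M)
    (hQ : ∀ a ∈ M, a * star a ∈ 𝒜) {a : R} (ha : a ∈ M) :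
    a * star a ∈ projectionsWithConjugatesIn M 𝒜 := by
  refine ⟨(hM.isPartialIsometry a ha).isStarProjection_mul_star, fun b hb => ?_⟩
  simpa [star_mul, mul_assoc] using hQ _ (hM.mul_mem b hb a ha)

theorem mul_mem_projectionsWithConjugatesIn (hM : IsPartialIsometrySemigroup M) (h1 : 1 ∈ M)
    (hmul : ∀ x ∈ 𝒜, ∀ y ∈ 𝒜, x * y ∈ 𝒜) (hcomm : ∀ x ∈ 𝒜, ∀ y ∈ 𝒜, Commute x y)
    (hinit : ∀ a ∈ M, ∀ x ∈ 𝒜, Commute (star a * a) x) {p q : R}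
    (hp : p ∈ projectionsWithConjugatesIn M 𝒜) (hq : q ∈ projectionsWithConjugatesIn M 𝒜) :
    p * q ∈ projectionsWithConjugatesIn M 𝒜 := by
  have hp𝒜 := mem_of_mem_projectionsWithConjugatesIn h1 hp
  have hq𝒜 := mem_of_mem_projectionsWithConjugatesIn h1 hq
  refine ⟨⟨hp.1.isIdempotentElem.mul_of_commute (hcomm p hp𝒜 q hq𝒜) hq.1.isIdempotentElem,
    (hp.1.isSelfAdjoint.commute_iff hq.1.isSelfAdjoint).mp (hcomm p hp𝒜 q hq𝒜)⟩, fun a ha => ?_⟩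
  have hpa := (hM.isPartialIsometry a ha).mul_mul_star_mul_self (hinit a ha p hp𝒜)
  have hsplit : a * (p * q) * star a = a * p * star a * (a * q * star a) :=
    calc a * (p * q) * star a = a * p * (star a * a) * q * star a := by
          rw [hpa]; simp only [mul_assoc]
      _ = a * p * star a * (a * q * star a) := by simp only [mul_assoc]
  rw [hsplit]
  exact hmul _ (hp.2 a ha) _ (hq.2 a ha)

theorem conj_mem_projectionsWithConjugatesIn (hM : IsPartialIsometrySemigroup M) (h1 : 1 ∈ M)
    (hinit : ∀ a ∈ M, ∀ x ∈ 𝒜, Commute (star a * a) x) {a p : R} (ha : a ∈ M)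
    (hp : p ∈ projectionsWithConjugatesIn M 𝒜) :
    a * p * star a ∈ projectionsWithConjugatesIn M 𝒜 := by
  have hpa := (hM.isPartialIsometry a ha).mul_mul_star_mul_self
    (hinit a ha p (mem_of_mem_projectionsWithConjugatesIn h1 hp))
  refine ⟨⟨?_, by simp [IsSelfAdjoint, star_mul, hp.1.isSelfAdjoint.star_eq, mul_assoc]⟩,
    fun b hb => ?_⟩
  · calc a * p * star a * (a * p * star a) = a * p * (star a * a) * p * star a := by
          simp only [mul_assoc]
      _ = a * p * star a := by rw [hpa, mul_assoc a p p, hp.1.isIdempotentElem.eq]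
  · simpa [star_mul, mul_assoc] using hp.2 _ (hM.mul_mem b hb a ha)

theorem subset_projectionsWithConjugatesIn_mul (hQ : ∀ a ∈ M, a * star a ∈ 𝒜) :
    M ⊆ projectionsWithConjugatesIn M 𝒜 * M :=
  fun a ha => ⟨1, one_mem_projectionsWithConjugatesIn hQ, a, ha, one_mul a⟩

theorem mul_star_mem_projectionsWithConjugatesIn_mul (hM : IsPartialIsometrySemigroup M)
    (h1 : 1 ∈ M) (hQ : ∀ a ∈ M, a * star a ∈ 𝒜) {a : R} (ha : a ∈ M) :
    a * star a ∈ projectionsWithConjugatesIn M 𝒜 * M :=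
  ⟨_, mul_star_mem_projectionsWithConjugatesIn hM hQ ha, 1, h1, mul_one _⟩

theorem isPartialIsometrySemigroup_projectionsWithConjugatesIn_mul
    (hM : IsPartialIsometrySemigroup M) (h1 : 1 ∈ M) (hQ : ∀ a ∈ M, a * star a ∈ 𝒜)
    (hmul : ∀ x ∈ 𝒜, ∀ y ∈ 𝒜, x * y ∈ 𝒜) (hcomm : ∀ x ∈ 𝒜, ∀ y ∈ 𝒜, Commute x y)
    (hinit : ∀ a ∈ M, ∀ x ∈ 𝒜, Commute (star a * a) x) :
    IsPartialIsometrySemigroup (projectionsWithConjugatesIn M 𝒜 * M) where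
  mul_mem := by
    rintro _ ⟨p, hp, a, ha, rfl⟩ _ ⟨q, hq, b, hb, rfl⟩
    refine ⟨p * (a * q * star a),
      mul_mem_projectionsWithConjugatesIn hM h1 hmul hcomm hinit hp
        (conj_mem_projectionsWithConjugatesIn hM h1 hinit ha hq),
      a * b, hM.mul_mem a ha b hb, ?_⟩
    have hqa := (hM.isPartialIsometry a ha).mul_mul_star_mul_self
      (hinit a ha q (mem_of_mem_projectionsWithConjugatesIn h1 hq))
    calc p * (a * q * star a) * (a * b) = p * (a * q * (star a * a)) * b := by
          simp only [mul_assoc]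
      _ = p * a * (q * b) := by rw [hqa]; simp only [mul_assoc]
  isPartialIsometry := by
    rintro _ ⟨p, hp, a, ha, rfl⟩
    have hpa : Commute (a * star a) p :=
      hcomm _ (hQ a ha) p (mem_of_mem_projectionsWithConjugatesIn h1 hp)
    calc p * a * star (p * a) * (p * a) = p * (a * star a * (p * p)) * a := by
          simp only [star_mul, hp.1.isSelfAdjoint.star_eq, mul_assoc]
      _ = p * (a * star a * p) * a := by rw [hp.1.isIdempotentElem.eq]
      _ = p * (p * (a * star a)) * a := by rw [hpa.eq]
      _ = p * a := by
          rw [← mul_assoc, hp.1.isIdempotentElem.eq, mul_assoc, hM.isPartialIsometry a ha]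

theorem mul_star_mem_of_mem_projectionsWithConjugatesIn_mul (h1 : 1 ∈ M)
    (hQ : ∀ a ∈ M, a * star a ∈ 𝒜) (hmul : ∀ x ∈ 𝒜, ∀ y ∈ 𝒜, x * y ∈ 𝒜) {x : R}
    (hx : x ∈ projectionsWithConjugatesIn M 𝒜 * M) : x * star x ∈ 𝒜 := by
  obtain ⟨p, hp, a, ha, rfl⟩ := hx
  have hp𝒜 := mem_of_mem_projectionsWithConjugatesIn h1 hp
  have : p * a * star (p * a) = p * (a * star a) * p := by
    simp only [star_mul, hp.1.isSelfAdjoint.star_eq, mul_assoc]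
  rw [this]
  exact hmul _ (hmul p hp𝒜 _ (hQ a ha)) p hp𝒜

end Extension

theorem IsPartialIsometrySemigroup.sUnion {R : Type*} [Mul R] [Star R] {c : Set (Set R)}
    (hc : IsChain (· ⊆ ·) c) (h : ∀ M ∈ c, IsPartialIsometrySemigroup M) :
    IsPartialIsometrySemigroup (⋃₀ c) where
  mul_mem := by
    rintro a ⟨M, hM, ha⟩ b ⟨N, hN, hb⟩
    rcases hc.total hM hN with hMN | hNM
    · exact ⟨N, hN, (h N hN).mul_mem a (hMN ha) b hb⟩
    · exact ⟨M, hM, (h M hM).mul_mem a ha b (hNM hb)⟩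
  isPartialIsometry := by
    rintro a ⟨M, hM, ha⟩
    exact (h M hM).isPartialIsometry a ha

theorem exists_maximal_isPartialIsometrySemigroup {R : Type*} [Mul R] [Star R] {S 𝒜 : Set R}
    (hS : IsPartialIsometrySemigroup S) (hQS : ∀ a ∈ S, a * star a ∈ 𝒜) :
    ∃ M, S ⊆ M ∧
      Maximal (fun M => IsPartialIsometrySemigroup M ∧ ∀ a ∈ M, a * star a ∈ 𝒜) M := by
  refine zorn_subset_nonempty {M | IsPartialIsometrySemigroup M ∧ ∀ a ∈ M, a * star a ∈ 𝒜}
    (fun c hc hchain _ => ⟨⋃₀ c, ⟨?_, ?_⟩, ?_⟩) S ⟨hS, hQS⟩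
  · exact .sUnion hchain fun M hM => (hc hM).1
  · rintro a ⟨M, hM, ha⟩
    exact (hc hM).2 a ha
  · exact fun M hM => Set.subset_sUnion_of_mem hM

theorem Set.centralizer_centralizer_eq_of_subset {M : Type*} [Mul M] {S T : Set M}
    (hST : S ⊆ T) (hTS : T ⊆ S.centralizer.centralizer) :
    T.centralizer.centralizer = S.centralizer.centralizer := by
  refine (centralizer_subset (centralizer_subset hTS)).trans ?_ |>.antisymm
    (centralizer_subset (centralizer_subset hST))
  rw [centralizer_centralizer_centralizer]

/-- Proposition 2.4: if `𝒮` is a unital semigroup of partial isometries with `Q(𝒮)`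
commutative, then there is a semigroup `𝒮max` of partial isometries containing `𝒮`,
with `W*(Q(𝒮max)) = W*(Q(𝒮))` (double commutants agree), maximal with respect to these
two properties, and moreover `Q(𝒮max) ⊆ 𝒮max`. -/
theorem exists_maximal_semigroup {H : Type*} [NormedAddCommGroup H]
    [InnerProductSpace ℂ H] [CompleteSpace H] (𝒮 : Set (H →L[ℂ] H))
    (hmul : ∀ A ∈ 𝒮, ∀ B ∈ 𝒮, A * B ∈ 𝒮)
    (hone : (1 : H →L[ℂ] H) ∈ 𝒮)
    (hpi : ∀ A ∈ 𝒮, A * star A * A = A)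
    (hQcomm : ∀ A ∈ 𝒮, ∀ B ∈ 𝒮,
      (A * star A) * (B * star B) = (B * star B) * (A * star A)) :
    ∃ 𝒮max : Set (H →L[ℂ] H),
      (∀ A ∈ 𝒮max, ∀ B ∈ 𝒮max, A * B ∈ 𝒮max) ∧
      (∀ A ∈ 𝒮max, A * star A * A = A) ∧
      𝒮 ⊆ 𝒮max ∧
      Set.centralizer (Set.centralizer ((fun T => T * star T) '' 𝒮max)) =
        Set.centralizer (Set.centralizer ((fun T => T * star T) '' 𝒮)) ∧
      (∀ ℛ : Set (H →L[ℂ] H),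
        (∀ A ∈ ℛ, ∀ B ∈ ℛ, A * B ∈ ℛ) →
        (∀ A ∈ ℛ, A * star A * A = A) →
        𝒮max ⊆ ℛ →
        Set.centralizer (Set.centralizer ((fun T => T * star T) '' ℛ)) =
          Set.centralizer (Set.centralizer ((fun T => T * star T) '' 𝒮)) →
        ℛ = 𝒮max) ∧
      (∀ T ∈ 𝒮max, T * star T ∈ 𝒮max) := by
  set 𝒜 := Set.centralizer (Set.centralizer ((fun T => T * star T) '' 𝒮))
  have hQ𝒜 (ℛ : Set (H →L[ℂ] H)) (h : ((fun T => T * star T) '' ℛ).centralizer.centralizer = 𝒜)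
      (a : H →L[ℂ] H) (ha : a ∈ ℛ) : a * star a ∈ 𝒜 :=
    h ▸ Set.subset_centralizer_centralizer ⟨a, ha, rfl⟩
  obtain ⟨M, h𝒮M, ⟨hM, hQM⟩, hmax⟩ :=
    exists_maximal_isPartialIsometrySemigroup ⟨hmul, hpi⟩ (hQ𝒜 _ rfl)
  have hmul𝒜 : ∀ x ∈ 𝒜, ∀ y ∈ 𝒜, x * y ∈ 𝒜 := fun x hx y hy => Set.mul_mem_centralizer hx hy
  have hcomm𝒜 : ∀ x ∈ 𝒜, ∀ y ∈ 𝒜, Commute x y := Set.centralizer_centralizer_comm_of_comm <| by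
    rintro _ ⟨a, ha, rfl⟩ _ ⟨b, hb, rfl⟩
    exact hQcomm a ha b hb
  have hinit : ∀ a ∈ M, ∀ x ∈ 𝒜, Commute (star a * a) x := by
    refine fun a ha x hx => hx _ ?_
    rintro _ ⟨b, hb, rfl⟩
    have hbM : b ∈ M := h𝒮M hb
    exact ((hM.isPartialIsometry a ha).commute_star_mul_self_mul_star_self
      (hM.isPartialIsometry b hbM) (hM.isPartialIsometry _ (hM.mul_mem a ha b hbM))).eq.symm
  have h1 : 1 ∈ M := h𝒮M hone
  have hext : projectionsWithConjugatesIn M 𝒜 * M ⊆ M :=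
    hmax ⟨isPartialIsometrySemigroup_projectionsWithConjugatesIn_mul hM h1 hQM hmul𝒜 hcomm𝒜 hinit,
      fun x hx => mul_star_mem_of_mem_projectionsWithConjugatesIn_mul h1 hQM hmul𝒜 hx⟩
      (subset_projectionsWithConjugatesIn_mul hQM)
  refine ⟨M, hM.mul_mem, hM.isPartialIsometry, h𝒮M,
    Set.centralizer_centralizer_eq_of_subset (Set.image_mono h𝒮M) (Set.image_subset_iff.2 hQM),
    fun ℛ hℛmul hℛpi hMℛ hℛ => (hmax ⟨⟨hℛmul, hℛpi⟩, hQ𝒜 ℛ hℛ⟩ hMℛ).antisymm hMℛ,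
    fun a ha => hext (mul_star_mem_projectionsWithConjugatesIn_mul hM h1 hQM ha)⟩
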